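/- In the limit u_2 → u_1 (with -ν < u_3 < u_1 fixed), the Whitham speeds satisfy λ_1(u_1,u_1,u_3) = λ_2(u_1,u_1,u_3) = 2u_1 + u_3 + 2ν and λ_3(u_1,u_1,u_3) = 3u_3 + 2ν. -/

import Mathlib

open Real Filter Topology Set

/-- Complete elliptic integral of the first kind (parameter = modulus squared). -/
noncomputable def Kel (s : ℝ) : ℝ :=
  ∫ θ in (0:ℝ)..(π / 2), 1 / Real.sqrt (1 - s * Real.sin θ ^ 2)

/-- Complete elliptic integral of the second kind (parameter = modulus squared). -/
noncomputable def Eel (s : ℝ) : ℝ :=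
  ∫ θ in (0:ℝ)..(π / 2), Real.sqrt (1 - s * Real.sin θ ^ 2)

/-- Complete elliptic integral of the third kind (parameter = modulus squared). -/
noncomputable def Pel (ρ s : ℝ) : ℝ :=
  ∫ θ in (0:ℝ)..(π / 2),
    1 / ((1 - ρ * Real.sin θ ^ 2) * Real.sqrt (1 - s * Real.sin θ ^ 2))

/-- The modulus-squared parameter `s = (u_2-u_3)(u_1+ν)/((u_1-u_3)(u_2+ν))`. -/
noncomputable def sCH (ν u1 u2 u3 : ℝ) : ℝ :=
  (u2 - u3) * (u1 + ν) / ((u1 - u3) * (u2 + ν))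

/-- The parameter `ρ = (u_2-u_3)/(u_2+ν)`. -/
noncomputable def rCH (ν u2 u3 : ℝ) : ℝ := (u2 - u3) / (u2 + ν)

/-- The Whitham speed `λ_1` for the Camassa-Holm equation. -/
noncomputable def lam1 (ν u1 u2 u3 : ℝ) : ℝ :=
  u1 + u2 + u3 + 2 * ν +
    2 * (u1 - u2) * (u3 + ν) * Pel (rCH ν u2 u3) (sCH ν u1 u2 u3)
      / ((u2 + ν) * Eel (sCH ν u1 u2 u3))

/-- The Whitham speed `λ_2` for the Camassa-Holm equation. -/
noncomputable def lam2 (ν u1 u2 u3 : ℝ) : ℝ :=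
  u1 + u2 + u3 + 2 * ν +
    2 * (u3 - u2) * (1 - sCH ν u1 u2 u3) * Pel (rCH ν u2 u3) (sCH ν u1 u2 u3)
      / (Eel (sCH ν u1 u2 u3) - (1 - sCH ν u1 u2 u3) * Kel (sCH ν u1 u2 u3))

/-- The Whitham speed `λ_3` for the Camassa-Holm equation. -/
noncomputable def lam3 (ν u1 u2 u3 : ℝ) : ℝ :=
  u1 + u2 + u3 + 2 * ν +
    2 * (u2 - u3) * (u3 + ν) * Pel (rCH ν u2 u3) (sCH ν u1 u2 u3)
      / ((u2 + ν) * (Eel (sCH ν u1 u2 u3) - Kel (sCH ν u1 u2 u3)))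

/-! As `u₂ ↑ u₁` the modulus `s → 1⁻` while `ρ → (u₁ - u₃)/(u₁ + ν) ∈ (0, 1)`.
Elementary bounds on the integrands give `log (1 + π / (2√(1 - s))) ≤ K(s) ≤ π / (2√(1 - s))`,
so `K → ∞` but `(1 - s) K → 0`; `E` is continuous with `E(1) = 1`; and
`0 ≤ K/(1 - ρ) - Π(ρ, s) ≤ ρ/(1 - ρ)²`, so `Π/K → 1/(1 - ρ)`.
Since `u₁ - u₂` is a multiple of `1 - s`, the correction terms of `λ₁` and `λ₂` vanish in the limit,
while in `λ₃` dividing through by `K` leaves `-2(u₂ - u₃)(1 - ρ)(Π/K) → -2(u₁ - u₃)`. -/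

section EllipticIntegrands
variable {s ρ : ℝ}

lemma one_sub_mul_sin_sq_pos (hs : s < 1) (θ : ℝ) : 0 < 1 - s * sin θ ^ 2 := by
  rcases le_or_gt s 0 with h | h
  · nlinarith [sq_nonneg (sin θ)]
  · nlinarith [sin_sq_le_one θ]

lemma cos_le_sqrt_one_sub_mul_sin_sq (hs : s ≤ 1) (θ : ℝ) : cos θ ≤ √(1 - s * sin θ ^ 2) :=
  le_sqrt_of_sq_le (by nlinarith [sin_sq_add_cos_sq θ, sq_nonneg (sin θ)])

lemma sqrt_one_sub_mul_sin_sq_le_cos_add {θ : ℝ} (hs : s ≤ 1) (hθ : 0 ≤ cos θ) :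
    √(1 - s * sin θ ^ 2) ≤ cos θ + √(1 - s) := by
  have hr := sq_sqrt (sub_nonneg.mpr hs)
  refine sqrt_le_iff.mpr ⟨by positivity, ?_⟩
  nlinarith [sin_sq_add_cos_sq θ, sin_sq_le_one θ, mul_nonneg hθ (sqrt_nonneg (1 - s))]

lemma continuous_one_div_sqrt_one_sub_mul_sin_sq (hs : s < 1) :
    Continuous fun θ => 1 / √(1 - s * sin θ ^ 2) :=
  continuous_const.div (by fun_prop) fun θ => (sqrt_pos.mpr (one_sub_mul_sin_sq_pos hs θ)).ne'

end EllipticIntegrands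

section CompleteEllipticIntegrals
variable {s ρ : ℝ}

lemma Kel_nonneg : 0 ≤ Kel s :=
  intervalIntegral.integral_nonneg (by positivity) fun θ _ =>
    one_div_nonneg.mpr (sqrt_nonneg _)

lemma Kel_le (hs0 : 0 ≤ s) (hs1 : s < 1) : Kel s ≤ π / 2 / √(1 - s) := by
  have hr : 0 < √(1 - s) := sqrt_pos.mpr (by linarith)
  calc Kel s ≤ ∫ _ in (0 : ℝ)..(π / 2), 1 / √(1 - s) :=
        intervalIntegral.integral_mono_on (by positivity)
          ((continuous_one_div_sqrt_one_sub_mul_sin_sq hs1).intervalIntegrable _ _)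
          intervalIntegrable_const fun θ _ =>
          one_div_le_one_div_of_le hr (sqrt_le_sqrt (by nlinarith [sin_sq_le_one θ]))
    _ = π / 2 / √(1 - s) := by simp [div_eq_mul_one_div (π / 2)]

lemma log_le_Kel (hs : s < 1) : log (1 + π / 2 / √(1 - s)) ≤ Kel s := by
  set r := √(1 - s)
  have hr : 0 < r := sqrt_pos.mpr (by linarith)
  calc log (1 + π / 2 / r) = ∫ θ in (0 : ℝ)..(π / 2), (r + π / 2 - θ)⁻¹ := by
        rw [intervalIntegral.integral_comp_sub_left (fun x => x⁻¹), add_sub_cancel_right, sub_zero,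
          integral_inv_of_pos hr (by positivity), add_div, div_self hr.ne']
    _ ≤ Kel s := by
      refine intervalIntegral.integral_mono_on (by positivity) ?_
        ((continuous_one_div_sqrt_one_sub_mul_sin_sq hs).intervalIntegrable _ _) fun θ hθ => ?_
      · refine ContinuousOn.intervalIntegrable (ContinuousOn.inv₀ (by fun_prop) fun θ hθ => ?_)
        rw [uIcc_of_le (by positivity)] at hθ
        exact (by linarith [hθ.2] : 0 < r + π / 2 - θ).ne'
      · have hcos : cos θ ≤ π / 2 - θ := by
          rw [← sin_pi_div_two_sub]; exact sin_le (by linarith [hθ.2])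
        have := sqrt_one_sub_mul_sin_sq_le_cos_add hs.le
          (cos_nonneg_of_mem_Icc ⟨by linarith [hθ.1, pi_pos], hθ.2⟩)
        rw [one_div]
        exact inv_anti₀ (sqrt_pos.mpr (one_sub_mul_sin_sq_pos hs θ)) (by linarith)

lemma continuous_Eel : Continuous Eel :=
  intervalIntegral.continuous_parametric_intervalIntegral_of_continuous' (by fun_prop) _ _

lemma Eel_one : Eel 1 = 1 := by
  have h : EqOn (fun θ => √(1 - 1 * sin θ ^ 2)) cos (uIcc 0 (π / 2)) := fun θ hθ => by
    rw [uIcc_of_le (by positivity)] at hθ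
    dsimp only
    rw [one_mul, ← cos_sq', sqrt_sq (cos_nonneg_of_mem_Icc ⟨by linarith [hθ.1, pi_pos], hθ.2⟩)]
  rw [Eel, intervalIntegral.integral_congr h, integral_cos, sin_pi_div_two, sin_zero, sub_zero]

lemma Pel_integrand_bounds (hs : s < 1) (hρ0 : 0 ≤ ρ) (hρ1 : ρ < 1) {θ : ℝ} (hθ : 0 ≤ cos θ) :
    0 ≤ 1 / √(1 - s * sin θ ^ 2) / (1 - ρ) -
        1 / ((1 - ρ * sin θ ^ 2) * √(1 - s * sin θ ^ 2)) ∧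
      1 / √(1 - s * sin θ ^ 2) / (1 - ρ) -
        1 / ((1 - ρ * sin θ ^ 2) * √(1 - s * sin θ ^ 2)) ≤ ρ / (1 - ρ) ^ 2 * cos θ := by
  have hcw := cos_le_sqrt_one_sub_mul_sin_sq hs.le θ
  have hcos : 1 - ρ * sin θ ^ 2 - (1 - ρ) = ρ * cos θ ^ 2 := by
    linear_combination (-ρ) * sin_sq_add_cos_sq θ
  set w := √(1 - s * sin θ ^ 2)
  set a := 1 - ρ * sin θ ^ 2
  set b := 1 - ρ
  have hw : 0 < w := sqrt_pos.mpr (one_sub_mul_sin_sq_pos hs θ)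
  have hb : 0 < b := by linarith
  have ha : b ≤ a := by nlinarith [sin_sq_le_one θ]
  have ha0 : 0 < a := hb.trans_le ha
  clear_value w a b
  have hdiff : 1 / w / b - 1 / (a * w) = ρ * cos θ ^ 2 / (b * a * w) := by
    field_simp
    linear_combination hcos
  rw [hdiff]
  refine ⟨by positivity, ?_⟩
  rw [div_mul_eq_mul_div, div_le_div_iff₀ (by positivity) (by positivity)]
  have := mul_le_mul ha hcw hθ (by linarith)
  have : 0 ≤ ρ * cos θ * b := by positivity
  nlinarith

lemma Kel_div_sub_Pel_mem_Icc (hs : s < 1) (hρ0 : 0 ≤ ρ) (hρ1 : ρ < 1) :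
    Kel s / (1 - ρ) - Pel ρ s ∈ Icc 0 (ρ / (1 - ρ) ^ 2) := by
  have hK := continuous_one_div_sqrt_one_sub_mul_sin_sq hs
  have hP : Continuous fun θ => 1 / ((1 - ρ * sin θ ^ 2) * √(1 - s * sin θ ^ 2)) :=
    continuous_const.div (by fun_prop) fun θ => mul_ne_zero
      (one_sub_mul_sin_sq_pos hρ1 θ).ne' (sqrt_pos.mpr (one_sub_mul_sin_sq_pos hs θ)).ne'
  have hbounds : ∀ θ ∈ Icc 0 (π / 2), _ := fun θ hθ => Pel_integrand_bounds hs hρ0 hρ1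
    (cos_nonneg_of_mem_Icc ⟨by linarith [hθ.1, pi_pos], hθ.2⟩)
  have heq : Kel s / (1 - ρ) - Pel ρ s = ∫ θ in (0 : ℝ)..(π / 2),
      (1 / √(1 - s * sin θ ^ 2) / (1 - ρ) - 1 / ((1 - ρ * sin θ ^ 2) * √(1 - s * sin θ ^ 2))) := by
    rw [intervalIntegral.integral_sub ((hK.div_const _).intervalIntegrable _ _)
      (hP.intervalIntegrable _ _), intervalIntegral.integral_div, Kel, Pel]
  rw [heq]
  refine ⟨intervalIntegral.integral_nonneg (by positivity) fun θ hθ => (hbounds θ hθ).1, ?_⟩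
  calc _ ≤ ∫ θ in (0 : ℝ)..(π / 2), ρ / (1 - ρ) ^ 2 * cos θ :=
        intervalIntegral.integral_mono_on (by positivity)
          (((hK.div_const _).sub hP).intervalIntegrable _ _)
          ((continuous_cos.const_mul _).intervalIntegrable _ _) fun θ hθ => (hbounds θ hθ).2
    _ = ρ / (1 - ρ) ^ 2 := by simp [integral_cos]

lemma tendsto_Kel_nhdsLT_one : Tendsto Kel (𝓝[<] 1) atTop := by
  have hr : Tendsto (fun s => √(1 - s)) (𝓝[<] 1) (𝓝[>] 0) := by
    refine tendsto_nhdsWithin_iff.mpr ⟨?_, ?_⟩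
    · have : ContinuousAt (fun s : ℝ => √(1 - s)) 1 := by fun_prop
      simpa using this.tendsto.mono_left nhdsWithin_le_nhds
    · filter_upwards [self_mem_nhdsWithin] with s hs using sqrt_pos.mpr (sub_pos.mpr hs)
  have hlog : Tendsto (fun r => log (1 + π / 2 / r)) (𝓝[>] 0) atTop := by
    have h : Tendsto (fun r : ℝ => π / 2 * r⁻¹) (𝓝[>] 0) atTop :=
      tendsto_inv_nhdsGT_zero.const_mul_atTop (by positivity)
    simpa only [div_eq_mul_inv, Function.comp_def] using
      tendsto_log_atTop.comp (tendsto_atTop_add_const_left _ 1 h)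
  refine tendsto_atTop_mono' _ ?_ (hlog.comp hr)
  filter_upwards [self_mem_nhdsWithin] with s hs using log_le_Kel hs

lemma tendsto_one_sub_mul_Kel_nhdsLT_one :
    Tendsto (fun s => (1 - s) * Kel s) (𝓝[<] 1) (𝓝 0) := by
  have hr : Tendsto (fun s => π / 2 * √(1 - s)) (𝓝[<] 1) (𝓝 0) := by
    have : ContinuousAt (fun s : ℝ => π / 2 * √(1 - s)) 1 := by fun_prop
    simpa using this.tendsto.mono_left nhdsWithin_le_nhds
  refine squeeze_zero' ?_ ?_ hr
  · filter_upwards [self_mem_nhdsWithin] with s hs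
      using mul_nonneg (sub_nonneg.mpr (le_of_lt hs)) Kel_nonneg
  · filter_upwards [Ioo_mem_nhdsLT zero_lt_one] with s hs
    calc (1 - s) * Kel s ≤ (1 - s) * (π / 2 / √(1 - s)) :=
          mul_le_mul_of_nonneg_left (Kel_le hs.1.le hs.2) (sub_nonneg.mpr hs.2.le)
      _ = π / 2 * √(1 - s) := by rw [mul_div_left_comm, div_sqrt]

end CompleteEllipticIntegrals

section DegenerateLimit
variable {α : Type*} {l : Filter α} {s ρ : α → ℝ} {ρ₀ : ℝ}

lemma tendsto_Eel_of_tendsto_nhdsLT_one (hs : Tendsto s l (𝓝[<] 1)) :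
    Tendsto (fun x => Eel (s x)) l (𝓝 1) :=
  Eel_one ▸ (continuous_Eel.tendsto 1).comp (hs.mono_right nhdsWithin_le_nhds)

lemma tendsto_Eel_div_Kel (hs : Tendsto s l (𝓝[<] 1)) :
    Tendsto (fun x => Eel (s x) / Kel (s x)) l (𝓝 0) :=
  (tendsto_Eel_of_tendsto_nhdsLT_one hs).div_atTop (tendsto_Kel_nhdsLT_one.comp hs)

lemma tendsto_Pel_div_Kel (hs : Tendsto s l (𝓝[<] 1)) (hρ : Tendsto ρ l (𝓝 ρ₀))
    (hρ₀ : ρ₀ ∈ Ioo 0 1) :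
    Tendsto (fun x => Pel (ρ x) (s x) / Kel (s x)) l (𝓝 (1 - ρ₀)⁻¹) := by
  have hK := tendsto_Kel_nhdsLT_one.comp hs
  have hev : ∀ᶠ x in l, s x < 1 ∧ ρ x ∈ Ioo 0 1 ∧ 0 < Kel (s x) :=
    (hs.eventually_mem self_mem_nhdsWithin).and
      ((hρ.eventually_mem (Ioo_mem_nhds hρ₀.1 hρ₀.2)).and (hK.eventually_gt_atTop 0))
  have h1ρ₀ : 1 - ρ₀ ≠ 0 := sub_ne_zero.mpr hρ₀.2.ne'
  have hD : Tendsto (fun x => (Kel (s x) / (1 - ρ x) - Pel (ρ x) (s x)) / Kel (s x)) l (𝓝 0) := by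
    refine squeeze_zero' ?_ ?_ ((hρ.div ((hρ.const_sub 1).pow 2) (pow_ne_zero 2 h1ρ₀)).div_atTop hK)
    · filter_upwards [hev] with x ⟨hsx, hρx, hKx⟩
      exact div_nonneg (Kel_div_sub_Pel_mem_Icc hsx hρx.1.le hρx.2).1 hKx.le
    · filter_upwards [hev] with x ⟨hsx, hρx, hKx⟩
      exact div_le_div_of_nonneg_right (Kel_div_sub_Pel_mem_Icc hsx hρx.1.le hρx.2).2 hKx.le
  have h := ((hρ.const_sub 1).inv₀ h1ρ₀).sub hD
  rw [sub_zero] at h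
  refine h.congr' ?_
  filter_upwards [hev] with x ⟨_, hρx, hKx⟩
  have : 1 - ρ x ≠ 0 := sub_ne_zero.mpr hρx.2.ne'
  field_simp
  ring

lemma tendsto_one_sub_mul_Pel (hs : Tendsto s l (𝓝[<] 1)) (hρ : Tendsto ρ l (𝓝 ρ₀))
    (hρ₀ : ρ₀ ∈ Ioo 0 1) :
    Tendsto (fun x => (1 - s x) * Pel (ρ x) (s x)) l (𝓝 0) := by
  have h := (tendsto_one_sub_mul_Kel_nhdsLT_one.comp hs).mul (tendsto_Pel_div_Kel hs hρ hρ₀)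
  rw [zero_mul] at h
  refine h.congr' ?_
  filter_upwards [(tendsto_Kel_nhdsLT_one.comp hs).eventually_gt_atTop 0] with x hK
  simp only [Function.comp_apply] at hK ⊢
  field_simp

end DegenerateLimit

section WhithamSpeeds
variable {ν u1 u2 u3 : ℝ}

lemma one_sub_sCH (h13 : u1 - u3 ≠ 0) (h2 : u2 + ν ≠ 0) :
    1 - sCH ν u1 u2 u3 = (u1 - u2) * (u3 + ν) / ((u1 - u3) * (u2 + ν)) := by
  rw [sCH]
  field_simp
  ring

lemma one_sub_rCH (h2 : u2 + ν ≠ 0) : 1 - rCH ν u2 u3 = (u3 + ν) / (u2 + ν) := by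
  rw [rCH]
  field_simp
  ring

lemma rCH_mem_Ioo (h3 : -ν < u3) (h32 : u3 < u2) : rCH ν u2 u3 ∈ Ioo 0 1 := by
  have h2 : 0 < u2 + ν := by linarith
  exact ⟨div_pos (by linarith) h2, (div_lt_one h2).mpr (by linarith)⟩

lemma tendsto_rCH (h1 : u1 + ν ≠ 0) :
    Tendsto (fun u2 => rCH ν u2 u3) (𝓝[<] u1) (𝓝 (rCH ν u1 u3)) :=
  ((continuousAt_id.sub continuousAt_const).div (continuousAt_id.add continuousAt_const)
    h1).tendsto.mono_left nhdsWithin_le_nhds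

lemma tendsto_sCH (h3 : -ν < u3) (h31 : u3 < u1) :
    Tendsto (fun u2 => sCH ν u1 u2 u3) (𝓝[<] u1) (𝓝[<] 1) := by
  have h13 : u1 - u3 ≠ 0 := sub_ne_zero.mpr h31.ne'
  have hden : (u1 - u3) * (u1 + ν) ≠ 0 := mul_ne_zero h13 (by linarith)
  refine tendsto_nhdsWithin_iff.mpr ⟨?_, ?_⟩
  · have hc : ContinuousAt (fun u2 => sCH ν u1 u2 u3) u1 :=
      ((continuousAt_id.sub continuousAt_const).mul continuousAt_const).div
        (continuousAt_const.mul (continuousAt_id.add continuousAt_const)) hden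
    have h1 : sCH ν u1 u1 u3 = 1 := div_self hden
    exact h1 ▸ hc.tendsto.mono_left nhdsWithin_le_nhds
  · filter_upwards [Ioo_mem_nhdsLT h31] with u2 hu2
    have h2 : 0 < u2 + ν := by linarith [hu2.1]
    rw [mem_Iio, ← sub_pos, one_sub_sCH h13 h2.ne']
    exact div_pos (mul_pos (by linarith [hu2.2]) (by linarith)) (mul_pos (by linarith) h2)

lemma tendsto_sum_nhdsLT (ν u1 u3 : ℝ) :
    Tendsto (fun u2 => u1 + u2 + u3 + 2 * ν) (𝓝[<] u1) (𝓝 (u1 + u1 + u3 + 2 * ν)) :=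
  (((tendsto_id.const_add u1).add_const u3).add_const _).mono_left nhdsWithin_le_nhds

lemma tendsto_lam1 (h3 : -ν < u3) (h31 : u3 < u1) :
    Tendsto (fun u2 => lam1 ν u1 u2 u3) (𝓝[<] u1) (𝓝 (2 * u1 + u3 + 2 * ν)) := by
  have hs := tendsto_sCH h3 h31
  have hP := tendsto_one_sub_mul_Pel hs (tendsto_rCH (u3 := u3) (by linarith))
    (rCH_mem_Ioo h3 h31)
  have h := (tendsto_sum_nhdsLT ν u1 u3).add ((hP.const_mul (2 * (u1 - u3))).div
    (tendsto_Eel_of_tendsto_nhdsLT_one hs) one_ne_zero)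
  refine Tendsto.congr' ?_ (by convert h using 2; ring)
  filter_upwards [Ioo_mem_nhdsLT h31] with u2 hu2
  have h13 : u1 - u3 ≠ 0 := sub_ne_zero.mpr h31.ne'
  have h2 : u2 + ν ≠ 0 := by linarith [hu2.1]
  simp only [lam1, Pi.div_apply]
  rw [one_sub_sCH h13 h2]
  field_simp

lemma tendsto_lam2 (h3 : -ν < u3) (h31 : u3 < u1) :
    Tendsto (fun u2 => lam2 ν u1 u2 u3) (𝓝[<] u1) (𝓝 (2 * u1 + u3 + 2 * ν)) := by
  have hs := tendsto_sCH h3 h31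
  have hP := tendsto_one_sub_mul_Pel hs (tendsto_rCH (u3 := u3) (by linarith))
    (rCH_mem_Ioo h3 h31)
  have hu : Tendsto (fun u2 => 2 * (u3 - u2)) (𝓝[<] u1) (𝓝 (2 * (u3 - u1))) :=
    ((tendsto_id.const_sub u3).const_mul 2).mono_left nhdsWithin_le_nhds
  have h := (tendsto_sum_nhdsLT ν u1 u3).add ((hu.mul hP).div
    ((tendsto_Eel_of_tendsto_nhdsLT_one hs).sub (tendsto_one_sub_mul_Kel_nhdsLT_one.comp hs))
    (by norm_num))
  refine Tendsto.congr (fun u2 => ?_) (by convert h using 2; ring)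
  simp only [lam2, Pi.div_apply, Function.comp_apply]
  ring

lemma tendsto_lam3 (h3 : -ν < u3) (h31 : u3 < u1) :
    Tendsto (fun u2 => lam3 ν u1 u2 u3) (𝓝[<] u1) (𝓝 (3 * u3 + 2 * ν)) := by
  have hs := tendsto_sCH h3 h31
  have hρ := tendsto_rCH (u3 := u3) (by linarith : u1 + ν ≠ 0)
  have hρ₀ := rCH_mem_Ioo h3 h31
  have hu : Tendsto (fun u2 => 2 * (u2 - u3)) (𝓝[<] u1) (𝓝 (2 * (u1 - u3))) :=
    ((tendsto_id.sub_const u3).const_mul 2).mono_left nhdsWithin_le_nhds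
  have h := (tendsto_sum_nhdsLT ν u1 u3).add
    (((hu.mul (hρ.const_sub 1)).mul (tendsto_Pel_div_Kel hs hρ hρ₀)).div
      ((tendsto_Eel_div_Kel hs).sub_const 1) (by norm_num))
  have h1ρ₀ : 1 - rCH ν u1 u3 ≠ 0 := sub_ne_zero.mpr hρ₀.2.ne'
  refine Tendsto.congr' ?_ (by convert h using 2; field_simp; ring)
  filter_upwards [Ioo_mem_nhdsLT h31,
    (tendsto_Kel_nhdsLT_one.comp hs).eventually_gt_atTop 0] with u2 hu2 hK
  have h2 : u2 + ν ≠ 0 := by linarith [hu2.1]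
  simp only [Function.comp_apply] at hK
  simp only [lam3, Pi.div_apply]
  rw [one_sub_rCH h2]
  field_simp

end WhithamSpeeds

/-- In the limit `u_2 → u_1⁻` (with `-ν < u_3 < u_1` fixed), the Whitham speeds
satisfy `λ_1, λ_2 → 2u_1 + u_3 + 2ν` and `λ_3 → 3u_3 + 2ν`. -/
theorem lam_leading_edge (ν u1 u3 : ℝ) (h3 : -ν < u3) (h31 : u3 < u1) :
    Tendsto (fun u2 => lam1 ν u1 u2 u3) (𝓝[<] u1) (𝓝 (2 * u1 + u3 + 2 * ν)) ∧
    Tendsto (fun u2 => lam2 ν u1 u2 u3) (𝓝[<] u1) (𝓝 (2 * u1 + u3 + 2 * ν)) ∧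
    Tendsto (fun u2 => lam3 ν u1 u2 u3) (𝓝[<] u1) (𝓝 (3 * u3 + 2 * ν)) :=
  ⟨tendsto_lam1 h3 h31, tendsto_lam2 h3 h31, tendsto_lam3 h3 h31⟩
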